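/- arXiv:2009.09735 — 2 statements merged into one kernel-verified Lean document; each statement's English description precedes it below -/
import Mathlib

section
/- If U is a free group of rank n+1 and there exists a surjective homomorphism τ : U → K onto a free group K of finite rank such that the kernel of τ is nontrivial, then the rank of K is strictly less than n+1. -/
/-!
Counting homomorphisms to `ℤ/2` shows that a free group of rank `n + 1` surjects onto free groups
of rank at most `n + 1`. In the equality case the surjection becomes, after renaming generators,
a surjective endomorphism of a finitely generated free group. Free groups are residually finite
(a reduced word of length `L` acts nontrivially on `L + 1` points, each letter moving one point
down), so by Mal'cev's argument such an endomorphism is injective, contradicting `ker τ ≠ ⊥`.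
-/

open Function

theorem Equiv.Perm.exists_forall_apply_eq_of_rel {X : Type*} [Finite X] (R : X → X → Prop)
    (hfun : ∀ x y y', R x y → R x y' → y = y') (hinj : ∀ x x' y, R x y → R x' y → x = x') :
    ∃ σ : Perm X, ∀ x y, R x y → σ x = y := by
  classical
  have := Fintype.ofFinite X
  let f : X → X := fun x => if h : ∃ y, R x y then h.choose else x
  have hf : ∀ x y, R x y → f x = y := fun x y h => by
    have hx : ∃ y, R x y := ⟨y, h⟩
    simp only [f, dif_pos hx]
    exact hfun x _ _ hx.choose_spec h
  have hinjOn : Set.InjOn f {x | ∃ y, R x y} := by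
    rintro x ⟨y, hxy⟩ x' ⟨y', hxy'⟩ hxx'
    rw [hf x y hxy, hf x' y' hxy'] at hxx'
    exact hinj x x' y hxy (hxx' ▸ hxy')
  obtain ⟨g, hg⟩ := Set.MapsTo.exists_equiv_extend_of_card_eq (t := Finset.univ)
    (Finset.card_univ).symm (fun _ _ => Finset.mem_coe.2 (Finset.mem_univ _)) hinjOn
  refine ⟨g.trans (Equiv.subtypeUnivEquiv Finset.mem_univ), fun x y h => ?_⟩
  simpa [hf x y h] using hg x ⟨y, h⟩

theorem List.prod_apply_of_getElem_apply_succ {X : Type*} :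
    ∀ (l : List (Equiv.Perm X)) (p : ℕ → X),
      (∀ k (hk : k < l.length), l[k] (p (k + 1)) = p k) → l.prod (p l.length) = p 0
  | [], _, _ => rfl
  | σ :: l, p, h => by
    have ih := prod_apply_of_getElem_apply_succ l (fun k => p (k + 1))
      (fun k hk => h (k + 1) (by simpa using hk))
    rw [List.prod_cons, Equiv.Perm.mul_apply, List.length_cons, ih]
    exact h 0 (by simp)

namespace FreeGroup

variable {α : Type*} {r : List (α × Bool)}

theorem IsReduced.snd_eq_of_getElem? (hr : IsReduced r) {k : ℕ} {a : α} {b b' : Bool}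
    (hk : r[k]? = some (a, b)) (hk' : r[k + 1]? = some (a, b')) : b = b' := by
  obtain ⟨hlt, hkb'⟩ := List.getElem?_eq_some_iff.1 hk'
  obtain ⟨_, hkb⟩ := List.getElem?_eq_some_iff.1 hk
  have := hr.getElem k hlt
  rw [hkb, hkb'] at this
  exact this rfl

/-- Reading the letters of `r` from right to left walks through the positions `r.length, …, 0`;
a letter `(a, b)` at position `k` is a step `k + 1 ↦ k` of `σ a ^ (±1)`. -/
def letterStep (r : List (α × Bool)) (a : α) (i j : Fin (r.length + 1)) : Prop :=
  ∃ k, (r[k]? = some (a, true) ∧ (i : ℕ) = k + 1 ∧ (j : ℕ) = k) ∨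
    (r[k]? = some (a, false) ∧ (i : ℕ) = k ∧ (j : ℕ) = k + 1)

theorem IsReduced.exists_perm_letterStep (hr : IsReduced r) (a : α) :
    ∃ σ : Equiv.Perm (Fin (r.length + 1)), ∀ i j, letterStep r a i j → σ i = j := by
  apply Equiv.Perm.exists_forall_apply_eq_of_rel
  · rintro x y y' ⟨k, ⟨hk, hx, hy⟩ | ⟨hk, hx, hy⟩⟩ ⟨k', ⟨hk', hx', hy'⟩ | ⟨hk', hx', hy'⟩⟩ <;>
      apply Fin.ext
    · omega
    · obtain rfl : k' = k + 1 := by omega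
      cases hr.snd_eq_of_getElem? hk hk'
    · obtain rfl : k = k' + 1 := by omega
      cases hr.snd_eq_of_getElem? hk' hk
    · omega
  · rintro x x' y ⟨k, ⟨hk, hx, hy⟩ | ⟨hk, hx, hy⟩⟩ ⟨k', ⟨hk', hx', hy'⟩ | ⟨hk', hx', hy'⟩⟩ <;>
      apply Fin.ext
    · omega
    · obtain rfl : k = k' + 1 := by omega
      cases hr.snd_eq_of_getElem? hk' hk
    · obtain rfl : k' = k + 1 := by omega
      cases hr.snd_eq_of_getElem? hk hk'
    · omega

variable [DecidableEq α]

theorem exists_monoidHom_perm_ne_one {w : FreeGroup α} (hw : w ≠ 1) :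
    ∃ (m : ℕ) (π : FreeGroup α →* Equiv.Perm (Fin m)), π w ≠ 1 := by
  set r := w.toWord
  choose σ hσ using (isReduced_toWord (x := w)).exists_perm_letterStep
  refine ⟨r.length + 1, lift σ, fun h => ?_⟩
  let pos : ℕ → Fin (r.length + 1) := Fin.ofNat _
  have hpos : ∀ j ≤ r.length, (pos j : ℕ) = j := fun j hj => Nat.mod_eq_of_lt (by omega)
  have hstep : ∀ k (hk : k < r.length),
      (cond r[k].2 (σ r[k].1) (σ r[k].1)⁻¹) (pos (k + 1)) = pos k := by
    intro k hk
    rcases hr : r[k] with ⟨a, _ | _⟩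
    all_goals have hr' := List.getElem?_eq_some_iff.2 ⟨hk, hr⟩
    · rw [cond_false, Equiv.Perm.inv_eq_iff_eq]
      exact (hσ a _ _ ⟨k, .inr ⟨hr', hpos k hk.le, hpos (k + 1) hk⟩⟩).symm
    · exact hσ a _ _ ⟨k, .inl ⟨hr', hpos (k + 1) hk, hpos k hk.le⟩⟩
  set l := r.map fun x => cond x.2 (σ x.1) (σ x.1)⁻¹
  have hprod := List.prod_apply_of_getElem_apply_succ l pos
    (fun k hk => by simpa [l] using hstep k (by simpa [l] using hk))
  have hone : l.prod = 1 := by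
    rw [← lift_mk, mk_toWord, h]
  rw [hone, List.length_map, Equiv.Perm.one_apply] at hprod
  have hlen : r.length = 0 := by simpa [hpos] using congrArg Fin.val hprod
  exact hw (toWord_eq_nil_iff.1 (List.eq_nil_of_length_eq_zero hlen))

end FreeGroup

instance FreeGroup.residuallyFinite {α : Type*} : Group.ResiduallyFinite (FreeGroup α) := by
  classical
  refine Group.residuallyFinite_of_forall_exists_finite_monoidHom fun w hw => ?_
  obtain ⟨m, π, hπ⟩ := exists_monoidHom_perm_ne_one hw
  exact ⟨_, _, inferInstance, π, hπ⟩

theorem Group.FG.finite_monoidHom (G H : Type*) [Group G] [Group.FG G] [Monoid H] [Finite H] :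
    Finite (G →* H) := by
  obtain ⟨S, hS, hSfin⟩ := Group.fg_iff.1 ‹Group.FG G›
  have := hSfin.to_subtype
  refine Finite.of_injective (fun ψ : G →* H => fun s : S => ψ s) fun ψ ψ' h => ?_
  exact MonoidHom.eq_of_eqOn_dense hS fun s hs => congrFun h ⟨s, hs⟩

/-- Mal'cev: a kernel element `w ≠ 1` survives in a finite quotient `π`, and since `· ∘ φ` is
injective, hence bijective, on the finitely many homomorphisms to that quotient, `π = ψ ∘ φ`
kills `w`. -/
theorem Group.ResiduallyFinite.injective_of_surjective {G : Type*} [Group G] [Group.FG G]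
    [Group.ResiduallyFinite G] {φ : G →* G} (hφ : Surjective φ) : Injective φ := by
  refine (injective_iff_map_eq_one φ).2 fun w hw => ?_
  by_contra hne
  obtain ⟨N, hN⟩ := Group.exists_finiteIndexNormalSubgroup_notMem w hne
  have := Group.FG.finite_monoidHom G (G ⧸ N.toSubgroup)
  have hcomp : Injective fun ψ : G →* G ⧸ N.toSubgroup => ψ.comp φ :=
    fun _ _ h => (MonoidHom.cancel_right hφ).1 h
  obtain ⟨ψ, hψ⟩ := Finite.injective_iff_surjective.1 hcomp (QuotientGroup.mk' N.toSubgroup)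
  apply hN
  rw [← FiniteIndexNormalSubgroup.mem_toSubgroup_iff, ← QuotientGroup.eq_one_iff,
    ← QuotientGroup.mk'_apply, ← hψ, MonoidHom.comp_apply, hw, map_one]

theorem FreeGroup.card_le_of_surjective {α β : Type*} [Finite α] [Finite β]
    {τ : FreeGroup α →* FreeGroup β} (hτ : Surjective τ) : Nat.card β ≤ Nat.card α := by
  let M := Multiplicative (ZMod 2)
  have hcomp : Injective fun f : β → M => lift.symm ((lift f).comp τ) :=
    fun _ _ h => lift.injective ((MonoidHom.cancel_right hτ).1 (lift.symm.injective h))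
  have hcard := Nat.card_le_card_of_injective _ hcomp
  rw [Nat.card_fun, Nat.card_fun, show Nat.card M = 2 from Nat.card_zmod 2] at hcard
  exact (Nat.pow_le_pow_iff_right one_lt_two).1 hcard

theorem rank_lt_of_surjective_nontrivial_ker (n : ℕ) {β : Type*} [Finite β]
    (τ : FreeGroup (Fin (n + 1)) →* FreeGroup β)
    (hτ : Function.Surjective τ) (hker : τ.ker ≠ ⊥) :
    Nat.card β < n + 1 := by
  have hle : Nat.card β ≤ n + 1 := by
    simpa using FreeGroup.card_le_of_surjective hτ
  refine hle.lt_of_ne fun heq => hker ?_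
  obtain ⟨e⟩ : Nonempty (β ≃ Fin (n + 1)) := Finite.card_eq.1 (by simpa using heq)
  let ε := FreeGroup.freeGroupCongr e
  have hφ : Injective (ε.toMonoidHom.comp τ) :=
    Group.ResiduallyFinite.injective_of_surjective (ε.surjective.comp hτ)
  exact (MonoidHom.ker_eq_bot_iff τ).2 (Injective.of_comp (f := ε) hφ)
end

section
/- Let G be a group, π a set of primes, and H ≤ G. If H is finitely generated and I_π(H) is not finitely generated, and if moreover every proper subgroup of I_π(H) containing H fails to be π-isolated, then there exists a strictly increasing infinite chain H = H₁ < H₂ < H₃ < ⋯ of subgroups of I_π(H) with H_{i+1} generated by H_i and a single element f_i satisfying f_i ∉ H_i and f_i^{m_i} ∈ H_i for some π-number m_i. -/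
def IsPiNumber (π : Set ℕ) (m : ℕ) : Prop :=
  0 < m ∧ ∀ p : ℕ, p.Prime → p ∣ m → p ∈ π

def IsPiIsolated {G : Type*} [Group G] (π : Set ℕ) (K : Subgroup G) : Prop :=
  ∀ m : ℕ, IsPiNumber π m → ∀ g : G, g ^ m ∈ K → g ∈ K

def piIsolator {G : Type*} [Group G] (π : Set ℕ) (H : Subgroup G) : Subgroup G :=
  ⨅ (K : Subgroup G) (_ : IsPiIsolated π K ∧ H ≤ K), K

/-! Each finitely generated `K` with `H ≤ K ≤ I_π(H)` is a proper subgroup of `I_π(H)`, hence not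
π-isolated: some `g ∉ K` has a π-power in `K`, and `g ∈ I_π(H)` because `I_π(H)` is π-isolated.
Adjoining `g` keeps `K` finitely generated and inside `I_π(H)`, so the step can be iterated forever. -/

open Subgroup

section Chain

variable {G : Type*} [Group G]

lemma closure_singleton_fg (g : G) : (closure {g}).FG :=
  ⟨{g}, by simp⟩

lemma lt_sup_closure_singleton {K : Subgroup G} {g : G} (hg : g ∉ K) :
    K < K ⊔ closure {g} :=
  left_lt_sup.2 fun h => hg (closure_le K |>.1 h rfl)

lemma exists_chain_of_adjoin_step (P : Subgroup G → Prop) (R : Subgroup G → G → Prop)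
    {H : Subgroup G} (hH : P H)
    (step : ∀ K, P K → ∃ g, g ∉ K ∧ R K g ∧ P (K ⊔ closure {g})) :
    ∃ (Hc : ℕ → Subgroup G) (f : ℕ → G), Hc 0 = H ∧ StrictMono Hc ∧ (∀ i, P (Hc i)) ∧
      (∀ i, Hc (i + 1) = Hc i ⊔ closure {f i}) ∧ (∀ i, f i ∉ Hc i) ∧ ∀ i, R (Hc i) (f i) := by
  choose! g hgK hR hP using step
  set Hc : ℕ → Subgroup G := fun n => (fun K => K ⊔ closure {g K})^[n] H
  have hsucc : ∀ i, Hc (i + 1) = Hc i ⊔ closure {g (Hc i)} := fun i =>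
    Function.iterate_succ_apply' _ _ _
  have hPc : ∀ i, P (Hc i) := by
    intro i
    induction i with
    | zero => exact hH
    | succ i ih => exact hsucc i ▸ hP _ ih
  refine ⟨Hc, g ∘ Hc, rfl, strictMono_nat_of_lt_succ fun i => ?_, hPc, hsucc,
    fun i => hgK _ (hPc i), fun i => hR _ (hPc i)⟩
  exact hsucc i ▸ lt_sup_closure_singleton (hgK _ (hPc i))

end Chain

section PiIsolator

variable {G : Type*} [Group G] (π : Set ℕ)

lemma le_piIsolator (H : Subgroup G) : H ≤ piIsolator π H :=
  le_iInf₂ fun _ hK => hK.2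

lemma piIsolator_isPiIsolated (H : Subgroup G) : IsPiIsolated π (piIsolator π H) := by
  intro m hm g hg
  simp only [piIsolator, mem_iInf] at hg ⊢
  exact fun K hK => hK.1 m hm g (hg K hK)

lemma exists_pow_mem_not_mem_of_not_isPiIsolated {K : Subgroup G} (hK : ¬ IsPiIsolated π K) :
    ∃ g, g ∉ K ∧ ∃ m, IsPiNumber π m ∧ g ^ m ∈ K := by
  simp only [IsPiIsolated, not_forall] at hK
  obtain ⟨m, hm, g, hgm, hgK⟩ := hK
  exact ⟨g, hgK, m, hm, hgm⟩

end PiIsolator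

theorem exists_strict_chain_general {G : Type*} [Group G] (π : Set ℕ)
    (H : Subgroup G) (hHfg : H.FG)
    (hIfg : ¬ (piIsolator π H).FG)
    (hprop : ∀ K : Subgroup G, H ≤ K → K ≤ piIsolator π H →
      K ≠ piIsolator π H → ¬ IsPiIsolated π K) :
    ∃ (Hc : ℕ → Subgroup G) (f : ℕ → G) (m : ℕ → ℕ),
      Hc 0 = H ∧ StrictMono Hc ∧
      (∀ i, Hc i ≤ piIsolator π H) ∧
      (∀ i, Hc (i + 1) = Hc i ⊔ Subgroup.closure {f i}) ∧
      (∀ i, f i ∉ Hc i) ∧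
      (∀ i, IsPiNumber π (m i) ∧ f i ^ m i ∈ Hc i) := by
  set I := piIsolator π H
  obtain ⟨Hc, f, h0, hmono, hP, hsucc, hf, hR⟩ := exists_chain_of_adjoin_step
    (fun K => H ≤ K ∧ K ≤ I ∧ K.FG) (fun K g => ∃ m, IsPiNumber π m ∧ g ^ m ∈ K)
    ⟨le_rfl, le_piIsolator π H, hHfg⟩ <| by
      rintro K ⟨hHK, hKI, hKfg⟩
      have hKI' : K ≠ I := fun h => hIfg (h ▸ hKfg)
      obtain ⟨g, hgK, m, hm, hgm⟩ :=
        exists_pow_mem_not_mem_of_not_isPiIsolated π (hprop K hHK hKI hKI')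
      have hgI : g ∈ I := piIsolator_isPiIsolated π H m hm g (hKI hgm)
      exact ⟨g, hgK, ⟨m, hm, hgm⟩, le_sup_of_le_left hHK,
        sup_le hKI ((closure_le I).2 (Set.singleton_subset_iff.2 hgI)),
        hKfg.sup (closure_singleton_fg g)⟩
  choose m hm using hR
  exact ⟨Hc, f, m, h0, hmono, fun i => (hP i).2.1, hsucc, hf, hm⟩

theorem exists_strict_chain {G : Type*} [Group G] (π : Set ℕ)
    (hπ : ∀ p ∈ π, p.Prime) (H : Subgroup G) (hHfg : H.FG)
    (hIfg : ¬ (piIsolator π H).FG)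
    (hprop : ∀ K : Subgroup G, H ≤ K → K ≤ piIsolator π H →
      K ≠ piIsolator π H → ¬ IsPiIsolated π K) :
    ∃ (Hc : ℕ → Subgroup G) (f : ℕ → G) (m : ℕ → ℕ),
      Hc 0 = H ∧ StrictMono Hc ∧
      (∀ i, Hc i ≤ piIsolator π H) ∧
      (∀ i, Hc (i + 1) = Hc i ⊔ Subgroup.closure {f i}) ∧
      (∀ i, f i ∉ Hc i) ∧
      (∀ i, IsPiNumber π (m i) ∧ f i ^ m i ∈ Hc i) :=
  exists_strict_chain_general π H hHfg hIfg hprop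
end
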